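/- Let α, β ∈ ℂ, let I ⊆ ℝ∖{0} be an open interval, let u₁, u₂, v₁, v₂ : I → ℂ be differentiable functions satisfying the coupled Painlevé V system with parameters (α, β) on I, and let y, d : I → ℂ∖{0} be differentiable functions with s·y′(s)/y(s) = u₁(v₁−1)² + u₂(v₂−1)² + 2β and s·d′(s)/d(s) = −u₁(v₁²−1) − u₂(v₂²−1) + 2α on I. Then, with H the Hamiltonian of the system, for all s ∈ I: 2H(s) − u₁(s)v₁′(s) − u₂(s)v₂′(s) = d/ds(s·H(s)) + α·d′(s)/d(s) − β·y′(s)/y(s) − 2(α²−β²)/s. Equivalently, H = (u₁v₁′ + u₂v₂′ − H) + d/ds( sH + α·log d − β·log y − 2(α²−β²)·log s ). -/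

import Mathlib

open Complex Filter Topology MeasureTheory

/-- Right-hand side of the `u₁`-equation of the coupled Painlevé V system in
dimension four: `s·u₁′ = (s/2)u₁ − u₁²(v₁−1)(3v₁−1) − u₁u₂(v₂−1)(2v₁+v₂−1)
+ 2(α+β)u₁v₁ − 2βu₁`. -/
noncomputable def cpvRHSu₁ (α β s u₁ u₂ v₁ v₂ : ℂ) : ℂ :=
  (s / 2) * u₁ - u₁ ^ 2 * (v₁ - 1) * (3 * v₁ - 1)
    - u₁ * u₂ * (v₂ - 1) * (2 * v₁ + v₂ - 1) + 2 * (α + β) * u₁ * v₁ - 2 * β * u₁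

/-- Right-hand side of the `u₂`-equation of the coupled Painlevé V system. -/
noncomputable def cpvRHSu₂ (α β s u₁ u₂ v₁ v₂ : ℂ) : ℂ :=
  -(s / 2) * u₂ - u₂ ^ 2 * (v₂ - 1) * (3 * v₂ - 1)
    - u₁ * u₂ * (v₁ - 1) * (v₁ + 2 * v₂ - 1) + 2 * (α + β) * u₂ * v₂ - 2 * β * u₂

/-- Right-hand side of the `v₁`-equation of the coupled Painlevé V system. -/
noncomputable def cpvRHSv₁ (α β s u₁ u₂ v₁ v₂ : ℂ) : ℂ :=
  -(s / 2) * v₁ + 2 * u₁ * v₁ * (v₁ - 1) ^ 2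
    + u₂ * (v₁ + v₂) * (v₁ - 1) * (v₂ - 1) - α * (v₁ ^ 2 - 1) - β * (v₁ - 1) ^ 2

/-- Right-hand side of the `v₂`-equation of the coupled Painlevé V system. -/
noncomputable def cpvRHSv₂ (α β s u₁ u₂ v₁ v₂ : ℂ) : ℂ :=
  (s / 2) * v₂ + 2 * u₂ * v₂ * (v₂ - 1) ^ 2
    + u₁ * (v₁ + v₂) * (v₁ - 1) * (v₂ - 1) - α * (v₂ ^ 2 - 1) - β * (v₂ - 1) ^ 2

/-- `s·H` for the coupled Painlevé V system: `s·H = u₁²v₁(v₁−1)² + u₂²v₂(v₂−1)²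
− (s/2)(u₁v₁ − u₂v₂) − α(u₁(v₁²−1) + u₂(v₂²−1)) − β(u₁(v₁−1)² + u₂(v₂−1)²)
+ u₁u₂(v₁+v₂)(v₁−1)(v₂−1)`. -/
noncomputable def cpvSH (α β s u₁ u₂ v₁ v₂ : ℂ) : ℂ :=
  u₁ ^ 2 * v₁ * (v₁ - 1) ^ 2 + u₂ ^ 2 * v₂ * (v₂ - 1) ^ 2
    - (s / 2) * (u₁ * v₁ - u₂ * v₂)
    - α * (u₁ * (v₁ ^ 2 - 1) + u₂ * (v₂ ^ 2 - 1))
    - β * (u₁ * (v₁ - 1) ^ 2 + u₂ * (v₂ - 1) ^ 2)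
    + u₁ * u₂ * (v₁ + v₂) * (v₁ - 1) * (v₂ - 1)

/-- The Hamiltonian `H` of the coupled Painlevé V system, defined by `s·H = cpvSH`. -/
noncomputable def cpvH (α β s u₁ u₂ v₁ v₂ : ℂ) : ℂ := cpvSH α β s u₁ u₂ v₁ v₂ / s

/-- `(u₁, u₂, v₁, v₂)` is a solution of the coupled Painlevé V system in dimension
four with parameters `(α, β)` on a set `I ⊆ ℝ` of (nonzero) real values of `s`. -/
def IsCPVSolutionOn (α β : ℂ) (I : Set ℝ) (u₁ u₂ v₁ v₂ : ℝ → ℂ) : Prop :=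
  ∀ s ∈ I,
    DifferentiableAt ℝ u₁ s ∧ DifferentiableAt ℝ u₂ s ∧
    DifferentiableAt ℝ v₁ s ∧ DifferentiableAt ℝ v₂ s ∧
    (s : ℂ) * deriv u₁ s = cpvRHSu₁ α β s (u₁ s) (u₂ s) (v₁ s) (v₂ s) ∧
    (s : ℂ) * deriv u₂ s = cpvRHSu₂ α β s (u₁ s) (u₂ s) (v₁ s) (v₂ s) ∧
    (s : ℂ) * deriv v₁ s = cpvRHSv₁ α β s (u₁ s) (u₂ s) (v₁ s) (v₂ s) ∧
    (s : ℂ) * deriv v₂ s = cpvRHSv₂ α β s (u₁ s) (u₂ s) (v₁ s) (v₂ s)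

/-- `(u₁, u₂, v₁, v₂)`, as functions of `t > 0`, form a solution of the coupled
Painlevé V system with parameters `(α, β)` on the negative imaginary ray
`s = −it`, `t > 0`, where `d/ds` is interpreted as `i·d/dt`. -/
def IsCPVSolutionNegIm (α β : ℂ) (u₁ u₂ v₁ v₂ : ℝ → ℂ) : Prop :=
  ∀ t : ℝ, 0 < t →
    DifferentiableAt ℝ u₁ t ∧ DifferentiableAt ℝ u₂ t ∧
    DifferentiableAt ℝ v₁ t ∧ DifferentiableAt ℝ v₂ t ∧
    (-Complex.I * t) * (Complex.I * deriv u₁ t)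
      = cpvRHSu₁ α β (-Complex.I * t) (u₁ t) (u₂ t) (v₁ t) (v₂ t) ∧
    (-Complex.I * t) * (Complex.I * deriv u₂ t)
      = cpvRHSu₂ α β (-Complex.I * t) (u₁ t) (u₂ t) (v₁ t) (v₂ t) ∧
    (-Complex.I * t) * (Complex.I * deriv v₁ t)
      = cpvRHSv₁ α β (-Complex.I * t) (u₁ t) (u₂ t) (v₁ t) (v₂ t) ∧
    (-Complex.I * t) * (Complex.I * deriv v₂ t)
      = cpvRHSv₂ α β (-Complex.I * t) (u₁ t) (u₂ t) (v₁ t) (v₂ t)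

/-!
The system is Hamiltonian with respect to `sH`: `s·v′ = ∂ᵤ(sH)` and `s·u′ = −∂ᵥ(sH)`. Along a
solution the `u`- and `v`-contributions to `d(sH)/ds` therefore cancel, leaving the explicit
`∂ₛ(sH) = −(u₁v₁ − u₂v₂)/2`. After multiplying by `s` the identity becomes polynomial: since
`sH` is quadratic in `u`, `2sH − u·∂ᵤ(sH)` is the part of `sH` linear in `u`, and this is exactly
what the logarithmic derivatives of `y` and `d` contribute.
-/

theorem hasDerivAt_cpvSH (α β : ℂ) {u₁ u₂ v₁ v₂ : ℝ → ℂ} {u₁' u₂' v₁' v₂' : ℂ} {s : ℝ}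
    (hu₁ : HasDerivAt u₁ u₁' s) (hu₂ : HasDerivAt u₂ u₂' s)
    (hv₁ : HasDerivAt v₁ v₁' s) (hv₂ : HasDerivAt v₂ v₂' s) :
    HasDerivAt (fun x : ℝ => cpvSH α β x (u₁ x) (u₂ x) (v₁ x) (v₂ x))
      (-(u₁ s * v₁ s - u₂ s * v₂ s) / 2
        + cpvRHSv₁ α β s (u₁ s) (u₂ s) (v₁ s) (v₂ s) * u₁'
        + cpvRHSv₂ α β s (u₁ s) (u₂ s) (v₁ s) (v₂ s) * u₂'
        - cpvRHSu₁ α β s (u₁ s) (u₂ s) (v₁ s) (v₂ s) * v₁'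
        - cpvRHSu₂ α β s (u₁ s) (u₂ s) (v₁ s) (v₂ s) * v₂') s := by
  have hx : HasDerivAt (fun x : ℝ => (x : ℂ)) 1 s := by
    simpa using (hasDerivAt_id s).ofReal_comp
  have hw₁ := hv₁.sub_const 1
  have hw₂ := hv₂.sub_const 1
  have h := (((((((hu₁.mul hu₁).mul hv₁).mul (hw₁.mul hw₁)).add
      (((hu₂.mul hu₂).mul hv₂).mul (hw₂.mul hw₂))).sub
      ((hx.div_const 2).mul ((hu₁.mul hv₁).sub (hu₂.mul hv₂)))).sub
      (((hu₁.mul ((hv₁.mul hv₁).sub_const 1)).add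
        (hu₂.mul ((hv₂.mul hv₂).sub_const 1))).const_mul α)).sub
      (((hu₁.mul (hw₁.mul hw₁)).add (hu₂.mul (hw₂.mul hw₂))).const_mul β)).add
      ((((hu₁.mul hu₂).mul (hv₁.add hv₂)).mul hw₁).mul hw₂)
  simp only [cpvSH, pow_two]
  refine h.congr_deriv ?_
  simp only [cpvRHSu₁, cpvRHSu₂, cpvRHSv₁, cpvRHSv₂, Pi.mul_apply, Pi.add_apply, Pi.sub_apply]
  ring

theorem IsCPVSolutionOn.hasDerivAt_cpvSH {α β : ℂ} {I : Set ℝ} {u₁ u₂ v₁ v₂ : ℝ → ℂ}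
    (hsol : IsCPVSolutionOn α β I u₁ u₂ v₁ v₂) {s : ℝ} (hs : s ∈ I) (hs₀ : s ≠ 0) :
    HasDerivAt (fun x : ℝ => cpvSH α β x (u₁ x) (u₂ x) (v₁ x) (v₂ x))
      (-(u₁ s * v₁ s - u₂ s * v₂ s) / 2) s := by
  obtain ⟨hu₁, hu₂, hv₁, hv₂, eu₁, eu₂, ev₁, ev₂⟩ := hsol s hs
  convert _root_.hasDerivAt_cpvSH α β hu₁.hasDerivAt hu₂.hasDerivAt hv₁.hasDerivAt hv₂.hasDerivAt
    using 1
  refine mul_left_cancel₀ (Complex.ofReal_ne_zero.mpr hs₀) ?_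
  linear_combination (-cpvRHSv₁ α β s (u₁ s) (u₂ s) (v₁ s) (v₂ s)) * eu₁
    - cpvRHSv₂ α β s (u₁ s) (u₂ s) (v₁ s) (v₂ s) * eu₂
    + cpvRHSu₁ α β s (u₁ s) (u₂ s) (v₁ s) (v₂ s) * ev₁
    + cpvRHSu₂ α β s (u₁ s) (u₂ s) (v₁ s) (v₂ s) * ev₂

theorem two_mul_cpvSH_sub_u_mul_cpvRHSv (α β s u₁ u₂ v₁ v₂ : ℂ) :
    2 * cpvSH α β s u₁ u₂ v₁ v₂ - u₁ * cpvRHSv₁ α β s u₁ u₂ v₁ v₂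
        - u₂ * cpvRHSv₂ α β s u₁ u₂ v₁ v₂
      = -(s / 2) * (u₁ * v₁ - u₂ * v₂) - α * (u₁ * (v₁ ^ 2 - 1) + u₂ * (v₂ ^ 2 - 1))
          - β * (u₁ * (v₁ - 1) ^ 2 + u₂ * (v₂ - 1) ^ 2) := by
  simp only [cpvSH, cpvRHSv₁, cpvRHSv₂]
  ring

theorem cpv_hamiltonian_total_differential_identity
    (α β : ℂ) (I : Set ℝ)
    (hI0 : (0 : ℝ) ∉ I) (u₁ u₂ v₁ v₂ y d : ℝ → ℂ)
    (hsol : IsCPVSolutionOn α β I u₁ u₂ v₁ v₂)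
    (hy : ∀ s ∈ I, y s ≠ 0 ∧ DifferentiableAt ℝ y s ∧
      (s : ℂ) * deriv y s / y s
        = u₁ s * (v₁ s - 1) ^ 2 + u₂ s * (v₂ s - 1) ^ 2 + 2 * β)
    (hd : ∀ s ∈ I, d s ≠ 0 ∧ DifferentiableAt ℝ d s ∧
      (s : ℂ) * deriv d s / d s
        = -(u₁ s * ((v₁ s) ^ 2 - 1)) - u₂ s * ((v₂ s) ^ 2 - 1) + 2 * α) :
    ∀ s ∈ I,
      2 * cpvH α β (s : ℂ) (u₁ s) (u₂ s) (v₁ s) (v₂ s)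
          - u₁ s * deriv v₁ s - u₂ s * deriv v₂ s
        = deriv (fun x : ℝ => cpvSH α β (x : ℂ) (u₁ x) (u₂ x) (v₁ x) (v₂ x)) s
            + α * deriv d s / d s - β * deriv y s / y s
            - 2 * (α ^ 2 - β ^ 2) / (s : ℂ) := by
  intro s hs
  have hs₀ : s ≠ 0 := fun h => hI0 (h ▸ hs)
  have hs₀' : (s : ℂ) ≠ 0 := Complex.ofReal_ne_zero.mpr hs₀
  obtain ⟨-, -, -, -, -, -, ev₁, ev₂⟩ := hsol s hs
  have hH : (s : ℂ) * cpvH α β s (u₁ s) (u₂ s) (v₁ s) (v₂ s)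
      = cpvSH α β s (u₁ s) (u₂ s) (v₁ s) (v₂ s) := mul_div_cancel₀ _ hs₀'
  have hylog : (s : ℂ) * (β * deriv y s / y s)
      = β * (u₁ s * (v₁ s - 1) ^ 2 + u₂ s * (v₂ s - 1) ^ 2 + 2 * β) := by
    rw [← (hy s hs).2.2]; ring
  have hdlog : (s : ℂ) * (α * deriv d s / d s)
      = α * (-(u₁ s * ((v₁ s) ^ 2 - 1)) - u₂ s * ((v₂ s) ^ 2 - 1) + 2 * α) := by
    rw [← (hd s hs).2.2]; ring
  have hconst : (s : ℂ) * (2 * (α ^ 2 - β ^ 2) / s) = 2 * (α ^ 2 - β ^ 2) :=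
    mul_div_cancel₀ _ hs₀'
  rw [(hsol.hasDerivAt_cpvSH hs hs₀).deriv]
  refine mul_left_cancel₀ hs₀' ?_
  linear_combination 2 * hH - u₁ s * ev₁ - u₂ s * ev₂ - hdlog + hylog + hconst
    + two_mul_cpvSH_sub_u_mul_cpvRHSv α β s (u₁ s) (u₂ s) (v₁ s) (v₂ s)
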